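/- Let K be a field of characteristic zero, A = K[x] with |x| = 2n even and zero differential, and let P = A^{⊗2} ⊗ ∧(sx) be the path model with d(sx) = 1⊗x − x⊗1. Define the A^{⊗2}-linear map ψ from A ⊗_{A^{⊗2}} (P ⊗_A (A⊗∧s^kx)) into P ⊗_{A^{⊗2}} (P ⊗_A (A⊗∧s^kx)) by ψ(x⊗1) = 1⊗(x⊗1), ψ(1⊗sx) = 1⊗(sx⊗1) − sx⊗1, ψ(1⊗s^kx) = 1⊗(1⊗s^kx). Then ψ extends to a dga section of the quasi-isomorphism ε̄⊗id induced by ε̄: P → A. -/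

import Mathlib

noncomputable section
namespace Brane

/-- The monomial in a generator family indexed by a list. -/
def mon {A G : Type} [Ring A] (gen : G → A) (l : List G) : A := (l.map gen).prod

/-- The degree-`m` component: the `K`-span of monomials of total degree `m`. -/
def grading (K : Type) {A G : Type} [Field K] [Ring A] [Algebra K A]
    (gen : G → A) (dg : G → ℤ) (m : ℤ) : Submodule K A :=
  Submodule.span K {a : A | ∃ l : List G, (l.map dg).sum = m ∧ a = mon gen l}

/-- Graded commutativity on generators (Koszul signs). -/
def GradedComm (K : Type) {A G : Type} [Field K] [Ring A] [Algebra K A]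
    (gen : G → A) (dg : G → ℤ) : Prop :=
  ∀ i j, gen i * gen j = ((-1 : K) ^ (dg i * dg j)) • (gen j * gen i)

/-- `A` is the free graded-commutative algebra on the generators: the reduced sorted
monomials (odd generators appearing at most once) form a `K`-basis. -/
def IsFreeGCAOn (K : Type) {A G : Type} [Field K] [Ring A] [Algebra K A] [LinearOrder G]
    (gen : G → A) (dg : G → ℤ) : Prop :=
  ∃ b : Module.Basis {l : List G // l.Pairwise (· ≤ ·) ∧ ∀ g, Odd (dg g) → l.count g ≤ 1} K A,
    ∀ l, b l = mon gen l.1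

/-- A graded `K`-linear derivation of degree `r` (Koszul sign rule). -/
def IsGradedDer (K : Type) {A G : Type} [Field K] [Ring A] [Algebra K A]
    (gen : G → A) (dg : G → ℤ) (r : ℤ) (D : A →ₗ[K] A) : Prop :=
  (∀ (i : ℤ) (a : A), a ∈ grading K gen dg i → D a ∈ grading K gen dg (i + r)) ∧
  (∀ (i : ℤ) (a b : A), a ∈ grading K gen dg i →
    D (a * b) = D a * b + ((-1 : K) ^ (r * i)) • (a * D b))

/-- A differential: a graded derivation of degree `1` squaring to zero. -/
def IsDifferential (K : Type) {A G : Type} [Field K] [Ring A] [Algebra K A]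
    (gen : G → A) (dg : G → ℤ) (D : A →ₗ[K] A) : Prop :=
  IsGradedDer K gen dg 1 D ∧ ∀ a, D (D a) = 0

/-- The Sullivan (nilpotence) condition. -/
def SullivanCond (K : Type) {A G : Type} [Field K] [Ring A] [Algebra K A]
    (gen : G → A) (D : A →ₗ[K] A) : Prop :=
  ∃ w : G → ℕ, ∀ g, D (gen g) ∈ Algebra.adjoin K (gen '' {g' | w g' < w g})

/-- Decomposable elements (span of monomials of length at least two). -/
def decomposables (K : Type) {A G : Type} [Field K] [Ring A] [Algebra K A]
    (gen : G → A) : Submodule K A :=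
  Submodule.span K {a : A | ∃ l : List G, 2 ≤ l.length ∧ a = mon gen l}

/-!
Since `C1` has a single odd generator, its generators commute, and an algebra map out of `C1` is
the same as a family of pairwise commuting elements whose odd members square to zero. The family
`x₁, s^kx, sx_R − sx_L` in `C2` qualifies, because `sx_L` and `sx_R` anticommute and square to
zero. Each member is a `d`-cycle, as `d(sx_L) = d(sx_R)`, so `d ∘ ψ = 0` by the Leibniz rule; and
`(ε̄ ⊗ id) ∘ ψ` fixes the generators of `C1`, hence is the identity.
-/

section Monomials

variable {A G : Type} [Ring A] {gen : G → A}

lemma mon_cons (gen : G → A) (g : G) (l : List G) : mon gen (g :: l) = gen g * mon gen l := by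
  simp [mon]

lemma mon_append (gen : G → A) (l₁ l₂ : List G) :
    mon gen (l₁ ++ l₂) = mon gen l₁ * mon gen l₂ := by
  simp [mon]

lemma mon_singleton (gen : G → A) (g : G) : mon gen [g] = gen g := by
  simp [mon]

lemma mon_perm (hcomm : ∀ i j, Commute (gen i) (gen j)) {l₁ l₂ : List G} (h : l₁.Perm l₂) :
    mon gen l₁ = mon gen l₂ :=
  (h.map gen).prod_eq' <| List.pairwise_map.2 <| List.pairwise_of_forall hcomm

lemma mon_eq_zero_of_two_le_count [DecidableEq G] (hcomm : ∀ i j, Commute (gen i) (gen j))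
    {g : G} (hg : gen g * gen g = 0) {l : List G} (h : 2 ≤ l.count g) : mon gen l = 0 := by
  have hl : g ∈ l := List.count_pos_iff.mp (by omega)
  have hl' : g ∈ l.erase g := List.count_pos_iff.mp (by rw [List.count_erase_self]; omega)
  have hperm : l.Perm (g :: g :: (l.erase g).erase g) :=
    (List.perm_cons_erase hl).trans ((List.perm_cons_erase hl').cons g)
  rw [mon_perm hcomm hperm, mon_cons, mon_cons, ← mul_assoc, hg, zero_mul]

lemma exists_reduced_perm_or_two_le_count [LinearOrder G] (dg : G → ℤ) (m : List G) :
    (∃ l : {l : List G // l.Pairwise (· ≤ ·) ∧ ∀ g, Odd (dg g) → l.count g ≤ 1}, m.Perm l.1) ∨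
      ∃ g, Odd (dg g) ∧ 2 ≤ m.count g := by
  have hperm : m.Perm (m.insertionSort (· ≤ ·)) := (List.perm_insertionSort _ m).symm
  by_cases hred : ∀ g, Odd (dg g) → (m.insertionSort (· ≤ ·)).count g ≤ 1
  · exact Or.inl ⟨⟨_, List.pairwise_insertionSort _ m, hred⟩, hperm⟩
  · push Not at hred
    obtain ⟨g, hodd, hcount⟩ := hred
    exact Or.inr ⟨g, hodd, by rw [hperm.count_eq]; omega⟩

end Monomials

section GradedComm

variable {K A G : Type} [Field K] [Ring A] [Algebra K A] {gen : G → A} {dg : G → ℤ}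

lemma GradedComm.commute_of_even_left (hc : GradedComm K gen dg) {i : G} (hi : Even (dg i))
    (j : G) : Commute (gen i) (gen j) := by
  rw [Commute, SemiconjBy, hc i j, (hi.mul_right _).neg_one_zpow, one_smul]

lemma GradedComm.commute_of_odd_eq (hc : GradedComm K gen dg)
    (hodd : ∀ i j, Odd (dg i) → Odd (dg j) → i = j) (i j : G) : Commute (gen i) (gen j) := by
  rcases Int.even_or_odd (dg i) with hi | hi
  · exact hc.commute_of_even_left hi j
  rcases Int.even_or_odd (dg j) with hj | hj
  · exact (hc.commute_of_even_left hj i).symm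
  · rw [hodd i j hi hj]

lemma GradedComm.mul_comm_of_odd (hc : GradedComm K gen dg) {i j : G} (hi : Odd (dg i))
    (hj : Odd (dg j)) : gen i * gen j = -(gen j * gen i) := by
  rw [hc i j, (hi.mul hj).neg_one_zpow, neg_one_smul]

lemma GradedComm.mul_self_eq_zero [CharZero K] (hc : GradedComm K gen dg) {g : G}
    (hg : Odd (dg g)) : gen g * gen g = 0 := by
  have h : (2 : K) • (gen g * gen g) = 0 := by
    rw [two_smul]
    nth_rewrite 1 [hc.mul_comm_of_odd hg hg]
    exact neg_add_cancel _
  exact (smul_eq_zero.mp h).resolve_left two_ne_zero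

lemma GradedComm.sub_mul_self_eq_zero [CharZero K] (hc : GradedComm K gen dg) {i j : G}
    (hi : Odd (dg i)) (hj : Odd (dg j)) : (gen i - gen j) * (gen i - gen j) = 0 := by
  rw [sub_mul, mul_sub, mul_sub, hc.mul_self_eq_zero hi, hc.mul_self_eq_zero hj,
    hc.mul_comm_of_odd hi hj]
  abel

end GradedComm

section Derivations

variable {K A G H : Type} [Field K] [Ring A] [Algebra K A] {gen : G → A} {dg : G → ℤ}

lemma gen_mem_grading (g : G) : gen g ∈ grading K gen dg (dg g) :=
  Submodule.subset_span ⟨[g], by simp, (mon_singleton gen g).symm⟩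

lemma IsGradedDer.map_one {r : ℤ} {D : A →ₗ[K] A} (hD : IsGradedDer K gen dg r D) : D 1 = 0 := by
  have h := hD.2 0 1 1 (Submodule.subset_span ⟨[], by simp, by simp [mon]⟩)
  simp only [mul_one, one_mul, mul_zero, zpow_zero, one_smul] at h
  exact left_eq_add.mp h

lemma IsGradedDer.map_mon_eq_zero {r : ℤ} {D : A →ₗ[K] A} (hD : IsGradedDer K gen dg r D)
    {t : H → A} (hhom : ∀ h, ∃ m, t h ∈ grading K gen dg m) (hcyc : ∀ h, D (t h) = 0)
    (l : List H) : D (mon t l) = 0 := by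
  induction l with
  | nil => exact hD.map_one
  | cons h l ih =>
    obtain ⟨m, hm⟩ := hhom h
    rw [mon_cons, hD.2 m _ _ hm, hcyc h, ih, zero_mul, mul_zero, smul_zero, add_zero]

end Derivations

section FreeGCA

variable {K A B M G : Type} [Field K] [Ring A] [Algebra K A] [Ring B] [Algebra K B]
  [AddCommGroup M] [Module K M] [LinearOrder G] {gen : G → A} {dg : G → ℤ}

lemma IsFreeGCAOn.linearMap_ext (hfree : IsFreeGCAOn K gen dg) {f g : A →ₗ[K] M}
    (h : ∀ l, f (mon gen l) = g (mon gen l)) : f = g := by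
  obtain ⟨b, hb⟩ := hfree
  exact b.ext fun l => by rw [hb]; exact h l.1

lemma IsFreeGCAOn.algHom_ext (hfree : IsFreeGCAOn K gen dg) {φ χ : A →ₐ[K] B}
    (h : ∀ g, φ (gen g) = χ (gen g)) : φ = χ := by
  refine AlgHom.toLinearMap_injective (hfree.linearMap_ext fun l => ?_)
  induction l with
  | nil => simp [mon]
  | cons g l ih => simp only [AlgHom.toLinearMap_apply, mon_cons, map_mul, h g] at ih ⊢; rw [ih]

theorem IsFreeGCAOn.exists_algHom_mon_eq (hfree : IsFreeGCAOn K gen dg)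
    (hcomm : ∀ i j, Commute (gen i) (gen j)) (hsq : ∀ g, Odd (dg g) → gen g * gen g = 0)
    (t : G → B) (tcomm : ∀ i j, Commute (t i) (t j)) (tsq : ∀ g, Odd (dg g) → t g * t g = 0) :
    ∃ φ : A →ₐ[K] B, ∀ l, φ (mon gen l) = mon t l := by
  classical
  obtain ⟨b, hb⟩ := id hfree
  set f : A →ₗ[K] B := b.constr K fun l => mon t l.1
  have hf : ∀ m, f (mon gen m) = mon t m := by
    intro m
    rcases exists_reduced_perm_or_two_le_count dg m with ⟨l, hperm⟩ | ⟨g, hodd, hcount⟩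
    · rw [mon_perm hcomm hperm, mon_perm tcomm hperm, ← hb, b.constr_basis]
    · rw [mon_eq_zero_of_two_le_count hcomm (hsq g hodd) hcount,
        mon_eq_zero_of_two_le_count tcomm (tsq g hodd) hcount, map_zero]
  have hmul : (LinearMap.mul K A).compr₂ f = (LinearMap.mul K B).compl₁₂ f f :=
    hfree.linearMap_ext fun l₁ => hfree.linearMap_ext fun l₂ => by
      simp only [LinearMap.compr₂_apply, LinearMap.mul_apply', LinearMap.compl₁₂_apply]
      rw [← mon_append, hf, hf, hf, mon_append]
  refine ⟨AlgHom.ofLinearMap f (by simpa [mon] using hf []) fun a c => ?_, hf⟩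
  simpa using LinearMap.congr_fun (LinearMap.congr_fun hmul a) c

end FreeGCA

section PathModel

variable {K C : Type} [Field K] [Ring C] [Algebra K C] {c : Fin 3 ⊕ Fin 2 → C}
  {dg : Fin 3 ⊕ Fin 2 → ℤ}

/-- `ψ` on the generators `x, s^kx, sx` of `C1`, with `c = (x₁, x₂, s^kx, sx_L, sx_R)`. -/
def psiGen (c : Fin 3 ⊕ Fin 2 → C) : Fin 2 ⊕ Fin 1 → C :=
  Sum.elim (fun i => c (Sum.inl (![0, 2] i))) fun _ => c (Sum.inr 1) - c (Sum.inr 0)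

lemma psiGen_commute (hc : GradedComm K c dg) (heven : ∀ a, Even (dg (Sum.inl a)))
    (i j : Fin 2 ⊕ Fin 1) : Commute (psiGen c i) (psiGen c j) := by
  have hev (a b) : Commute (c (Sum.inl a)) (c b) := hc.commute_of_even_left (heven a) b
  rcases i with i | i <;> rcases j with j | j
  · exact hev _ _
  · exact (hev _ _).sub_right (hev _ _)
  · exact ((hev _ _).sub_right (hev _ _)).symm
  · exact Commute.refl _

lemma psiGen_inr_mul_self [CharZero K] (hc : GradedComm K c dg)
    (hodd : ∀ b, Odd (dg (Sum.inr b))) (i : Fin 1) :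
    psiGen c (Sum.inr i) * psiGen c (Sum.inr i) = 0 :=
  hc.sub_mul_self_eq_zero (hodd 1) (hodd 0)

lemma psiGen_mem_grading (hdg : dg (Sum.inr 0) = dg (Sum.inr 1)) (g : Fin 2 ⊕ Fin 1) :
    ∃ m, psiGen c g ∈ grading K c dg m := by
  rcases g with g | g
  · exact ⟨_, gen_mem_grading _⟩
  · exact ⟨_, sub_mem (gen_mem_grading _) (hdg ▸ gen_mem_grading (Sum.inr 0))⟩

lemma psiGen_cycle {D : C →ₗ[K] C} (hda : ∀ a, D (c (Sum.inl a)) = 0)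
    (hdb : D (c (Sum.inr 0)) = D (c (Sum.inr 1))) (g : Fin 2 ⊕ Fin 1) : D (psiGen c g) = 0 := by
  rcases g with g | g
  · exact hda _
  · exact (map_sub D _ _).trans (sub_eq_zero.2 hdb.symm)

end PathModel

theorem section_psi_exists_evenEM_general
    (K C1 C2 : Type) [Field K] [CharZero K]
    [Ring C1] [Algebra K C1] [Ring C2] [Algebra K C2]
    [LinearOrder (Fin 2 ⊕ Fin 1)]
    (n k : ℕ) (hkeven : Even k)
    -- C1: generators x, s^kx (even); sx (odd); zero differential
    (c1 : Fin 2 ⊕ Fin 1 → C1)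
    (hC1free : IsFreeGCAOn K c1 (Sum.elim ![(2 * n : ℤ), 2 * n - k] ![2 * n - 1]))
    (hC1comm : GradedComm K c1 (Sum.elim ![(2 * n : ℤ), 2 * n - k] ![2 * n - 1]))
    -- C2: generators x₁, x₂, s^kx (even); sx_L, sx_R (odd)
    (c2 : Fin 3 ⊕ Fin 2 → C2)
    (hC2comm : GradedComm K c2
      (Sum.elim ![(2 * n : ℤ), 2 * n, 2 * n - k] ![2 * n - 1, 2 * n - 1]))
    -- the differential of C2: d(sx_L) = d(sx_R) = x₂ − x₁, zero on the other generators
    (dC2 : C2 →ₗ[K] C2)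
    (hdC2 : IsDifferential K c2
      (Sum.elim ![(2 * n : ℤ), 2 * n, 2 * n - k] ![2 * n - 1, 2 * n - 1]) dC2)
    (hdC2a : ∀ i : Fin 3, dC2 (c2 (Sum.inl i)) = 0)
    (hdC2b : ∀ i : Fin 2, dC2 (c2 (Sum.inr i)) = c2 (Sum.inl 1) - c2 (Sum.inl 0))
    -- the quasi-isomorphism ε̄ ⊗ id : C2 → C1: x₁, x₂ ↦ x, s^kx ↦ s^kx, sx_L ↦ 0, sx_R ↦ sx
    (Eb : C2 →ₐ[K] C1)
    (hEb1 : Eb (c2 (Sum.inl 0)) = c1 (Sum.inl 0))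
    (hEb3 : Eb (c2 (Sum.inl 2)) = c1 (Sum.inl 1))
    (hEb4 : Eb (c2 (Sum.inr 0)) = 0) (hEb5 : Eb (c2 (Sum.inr 1)) = c1 (Sum.inr 0)) :
    -- ψ extends to a dga section of ε̄ ⊗ id
    ∃ ψ : C1 →ₐ[K] C2,
      ψ (c1 (Sum.inl 0)) = c2 (Sum.inl 0) ∧
      ψ (c1 (Sum.inl 1)) = c2 (Sum.inl 2) ∧
      ψ (c1 (Sum.inr 0)) = c2 (Sum.inr 1) - c2 (Sum.inr 0) ∧
      (∀ z : C1, dC2 (ψ z) = 0) ∧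
      (∀ z : C1, Eb (ψ z) = z) := by
  set dg₁ := Sum.elim ![(2 * n : ℤ), 2 * n - k] ![2 * n - 1]
  set dg₂ := Sum.elim ![(2 * n : ℤ), 2 * n, 2 * n - k] ![2 * n - 1, 2 * n - 1]
  have hx : Even (2 * n : ℤ) := even_two_mul _
  have hskx : Even (2 * n - k : ℤ) := hx.sub (by exact_mod_cast hkeven)
  have hsx : Odd (2 * n - 1 : ℤ) := hx.sub_odd odd_one
  have hdg₁ : ∀ g, Odd (dg₁ g) ↔ g.isRight := by
    rintro (g | g) <;> fin_cases g <;> simp [dg₁, hsx, Int.not_odd_iff_even.2, hx, hskx]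
  have hdg₂ : ∀ g, Odd (dg₂ g) ↔ g.isRight := by
    rintro (g | g) <;> fin_cases g <;> simp [dg₂, hsx, Int.not_odd_iff_even.2, hx, hskx]
  have hc1 : ∀ i j, Commute (c1 i) (c1 j) := hC1comm.commute_of_odd_eq <| by
    rintro (i | i) (j | j) hi hj <;> simp [hdg₁, Fin.fin_one_eq_zero] at hi hj ⊢
  obtain ⟨ψ, hψ⟩ := hC1free.exists_algHom_mon_eq hc1 (fun _ => hC1comm.mul_self_eq_zero)
    (psiGen c2) (psiGen_commute hC2comm fun a => Int.not_odd_iff_even.1 (by simp [hdg₂])) <| by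
      rintro (g | g) hg
      · simp [hdg₁] at hg
      · exact psiGen_inr_mul_self hC2comm (fun b => (hdg₂ _).2 rfl) g
  have hψ_gen (g) : ψ (c1 g) = psiGen c2 g := by simpa only [mon_singleton] using hψ [g]
  have hcyc : dC2 ∘ₗ ψ.toLinearMap = 0 := hC1free.linearMap_ext fun l => by
    simpa [hψ] using hdC2.1.map_mon_eq_zero (psiGen_mem_grading rfl)
      (psiGen_cycle hdC2a ((hdC2b 0).trans (hdC2b 1).symm)) l
  have hsection : Eb.comp ψ = AlgHom.id K C1 := hC1free.algHom_ext <| by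
    rintro (g | g) <;> fin_cases g <;> simp [hψ_gen, psiGen, hEb1, hEb3, hEb4, hEb5]
  exact ⟨ψ, hψ_gen _, hψ_gen _, hψ_gen _, fun z => by simpa using LinearMap.congr_fun hcyc z,
    AlgHom.congr_fun hsection⟩

/-- Let `K` be a field of characteristic zero, `A = K[x]` with
`|x| = 2n` even and zero differential, and `P = A^{⊗2} ⊗ ∧(sx)` the path model with
`d(sx) = 1⊗x − x⊗1`.  Define `ψ` from `C1 = A ⊗_{A^{⊗2}} (P ⊗_A (A ⊗ ∧s^kx))` (which has
zero differential) to `C2 = P ⊗_{A^{⊗2}} (P ⊗_A (A ⊗ ∧s^kx))` by `ψ(x⊗1) = 1⊗(x⊗1)`,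
`ψ(1⊗sx) = 1⊗(sx⊗1) − sx⊗1`, `ψ(1⊗s^kx) = 1⊗(1⊗s^kx)`.  Then `ψ` extends to a dga
section of the quasi-isomorphism `ε̄ ⊗ id` induced by `ε̄ : P → A`. -/
theorem section_psi_exists_evenEM
    (K C1 C2 : Type) [Field K] [CharZero K]
    [Ring C1] [Algebra K C1] [Ring C2] [Algebra K C2]
    [LinearOrder (Fin 2 ⊕ Fin 1)] [LinearOrder (Fin 3 ⊕ Fin 2)]
    (n k : ℕ) (hk : 0 < k) (hkeven : Even k) (hnk : k < 2 * n)
    -- C1: generators x, s^kx (even); sx (odd); zero differential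
    (c1 : Fin 2 ⊕ Fin 1 → C1)
    (hC1free : IsFreeGCAOn K c1 (Sum.elim ![(2 * n : ℤ), 2 * n - k] ![2 * n - 1]))
    (hC1comm : GradedComm K c1 (Sum.elim ![(2 * n : ℤ), 2 * n - k] ![2 * n - 1]))
    -- C2: generators x₁, x₂, s^kx (even); sx_L, sx_R (odd)
    (c2 : Fin 3 ⊕ Fin 2 → C2)
    (hC2free : IsFreeGCAOn K c2
      (Sum.elim ![(2 * n : ℤ), 2 * n, 2 * n - k] ![2 * n - 1, 2 * n - 1]))
    (hC2comm : GradedComm K c2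
      (Sum.elim ![(2 * n : ℤ), 2 * n, 2 * n - k] ![2 * n - 1, 2 * n - 1]))
    -- the differential of C2: d(sx_L) = d(sx_R) = x₂ − x₁, zero on the other generators
    (dC2 : C2 →ₗ[K] C2)
    (hdC2 : IsDifferential K c2
      (Sum.elim ![(2 * n : ℤ), 2 * n, 2 * n - k] ![2 * n - 1, 2 * n - 1]) dC2)
    (hdC2a : ∀ i : Fin 3, dC2 (c2 (Sum.inl i)) = 0)
    (hdC2b : ∀ i : Fin 2, dC2 (c2 (Sum.inr i)) = c2 (Sum.inl 1) - c2 (Sum.inl 0))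
    -- the quasi-isomorphism ε̄ ⊗ id : C2 → C1: x₁, x₂ ↦ x, s^kx ↦ s^kx, sx_L ↦ 0, sx_R ↦ sx
    (Eb : C2 →ₐ[K] C1)
    (hEb1 : Eb (c2 (Sum.inl 0)) = c1 (Sum.inl 0)) (hEb2 : Eb (c2 (Sum.inl 1)) = c1 (Sum.inl 0))
    (hEb3 : Eb (c2 (Sum.inl 2)) = c1 (Sum.inl 1))
    (hEb4 : Eb (c2 (Sum.inr 0)) = 0) (hEb5 : Eb (c2 (Sum.inr 1)) = c1 (Sum.inr 0)) :
    -- ψ extends to a dga section of ε̄ ⊗ id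
    ∃ ψ : C1 →ₐ[K] C2,
      ψ (c1 (Sum.inl 0)) = c2 (Sum.inl 0) ∧
      ψ (c1 (Sum.inl 1)) = c2 (Sum.inl 2) ∧
      ψ (c1 (Sum.inr 0)) = c2 (Sum.inr 1) - c2 (Sum.inr 0) ∧
      (∀ z : C1, dC2 (ψ z) = 0) ∧
      (∀ z : C1, Eb (ψ z) = z) :=
  section_psi_exists_evenEM_general K C1 C2 n k hkeven c1 hC1free hC1comm c2 hC2comm dC2 hdC2 hdC2a
    hdC2b Eb hEb1 hEb3 hEb4 hEb5

end Brane
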